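/- arXiv:2404.04954 — 3 statements merged into one kernel-verified Lean document; each statement's English description precedes it below -/
import Mathlib

section
/- For a Banach lattice E, the set aMwc(E) of almost M-weakly compact operators on E is a norm-closed left ideal in L(E): it is a closed subspace, and if T ∈ aMwc(E) and S ∈ L(E) then S∘T ∈ aMwc(E). -/
open Filter Topology

section Defs

/-- A pairwise disjoint sequence in a lattice-ordered group. -/
def DisjSeq {E : Type*} [Lattice E] [AddCommGroup E] (x : ℕ → E) : Prop :=
  ∀ m n : ℕ, m ≠ n → |x m| ⊓ |x n| = 0

/-- The solid hull of a set. -/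
def SolidHull {E : Type*} [NormedAddCommGroup E] [Lattice E] [HasSolidNorm E] [IsOrderedAddMonoid E] (A : Set E) : Set E :=
  {y | ∃ a ∈ A, |y| ≤ |a|}

/-- An L-weakly compact (Lwc) set: bounded, and every disjoint sequence in its
solid hull is norm null. -/
def IsLwcSet {E : Type*} [NormedAddCommGroup E] [Lattice E] [HasSolidNorm E] [IsOrderedAddMonoid E] (A : Set E) : Prop :=
  Bornology.IsBounded A ∧
    ∀ x : ℕ → E, (∀ n, x n ∈ SolidHull A) → DisjSeq x →
      Tendsto (fun n => ‖x n‖) atTop (𝓝 0)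

/-- A relatively weakly compact subset of a normed space. -/
def RelWeaklyCompact {X : Type*} [NormedAddCommGroup X] [NormedSpace ℝ X] (A : Set X) : Prop :=
  IsCompact (closure ((toWeakSpace ℝ X) '' A))

/-- Weak convergence of a sequence in a normed space. -/
def WeakTendsto {X : Type*} [NormedAddCommGroup X] [NormedSpace ℝ X] (x : ℕ → X) (a : X) : Prop :=
  ∀ φ : X →L[ℝ] ℝ, Tendsto (fun n => φ (x n)) atTop (𝓝 (φ a))

/-- A norm-bounded sequence. -/
def BddSeq {X : Type*} [NormedAddCommGroup X] (x : ℕ → X) : Prop :=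
  ∃ M : ℝ, ∀ n, ‖x n‖ ≤ M

/-- Almost L-weakly compact operator: maps relatively weakly compact sets onto Lwc sets. -/
def IsALwc {X F : Type*} [NormedAddCommGroup X] [NormedSpace ℝ X]
    [NormedAddCommGroup F] [Lattice F] [HasSolidNorm F] [IsOrderedAddMonoid F] [NormedSpace ℝ F] (T : X →L[ℝ] F) : Prop :=
  ∀ A : Set X, RelWeaklyCompact A → IsLwcSet (T '' A)

/-- M-weakly compact operator. -/
def IsMwc {E Y : Type*} [NormedAddCommGroup E] [Lattice E] [HasSolidNorm E] [IsOrderedAddMonoid E] [NormedSpace ℝ E]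
    [NormedAddCommGroup Y] [NormedSpace ℝ Y] (T : E →L[ℝ] Y) : Prop :=
  ∀ x : ℕ → E, DisjSeq x → BddSeq x → Tendsto (fun n => ‖T (x n)‖) atTop (𝓝 0)

/-- Almost M-weakly compact operator. -/
def IsAMwc {E Y : Type*} [NormedAddCommGroup E] [Lattice E] [HasSolidNorm E] [IsOrderedAddMonoid E] [NormedSpace ℝ E]
    [NormedAddCommGroup Y] [NormedSpace ℝ Y] (T : E →L[ℝ] Y) : Prop :=
  ∀ (f : ℕ → (Y →L[ℝ] ℝ)) (g : Y →L[ℝ] ℝ), WeakTendsto f g →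
    ∀ x : ℕ → E, DisjSeq x → BddSeq x →
      Tendsto (fun n => f n (T (x n))) atTop (𝓝 0)

/-- Order continuous norm (F = Fᵃ): every disjoint sequence in an order interval
[0, y] is norm null. -/
def HasOCN (F : Type*) [NormedAddCommGroup F] [Lattice F] [HasSolidNorm F] [IsOrderedAddMonoid F] : Prop :=
  ∀ y : F, 0 ≤ y → ∀ x : ℕ → F, (∀ n, x n ∈ Set.Icc (0 : F) y) → DisjSeq x →
    Tendsto (fun n => ‖x n‖) atTop (𝓝 0)

/-- Semi-compact operator. -/
def IsSemiCompact {E F : Type*} [NormedAddCommGroup E] [Lattice E] [HasSolidNorm E] [IsOrderedAddMonoid E] [NormedSpace ℝ E]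
    [NormedAddCommGroup F] [Lattice F] [HasSolidNorm F] [IsOrderedAddMonoid F] [NormedSpace ℝ F] (S : E →L[ℝ] F) : Prop :=
  ∀ ε : ℝ, 0 < ε → ∃ u : F, 0 ≤ u ∧
    ∀ x ∈ Metric.closedBall (0 : E) 1, ∃ w ∈ Set.Icc (-u) u, ‖S x - w‖ ≤ ε

/-- A positive functional on a Banach lattice. -/
def PosFunc {F : Type*} [NormedAddCommGroup F] [Lattice F] [HasSolidNorm F] [IsOrderedAddMonoid F] [NormedSpace ℝ F]
    (f : F →L[ℝ] ℝ) : Prop :=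
  ∀ y : F, 0 ≤ y → 0 ≤ f y

/-- The value of the modulus |f| of a functional at y (meaningful for 0 ≤ y). -/
noncomputable def absDual {F : Type*} [NormedAddCommGroup F] [Lattice F] [HasSolidNorm F] [IsOrderedAddMonoid F] [NormedSpace ℝ F]
    (f : F →L[ℝ] ℝ) (y : F) : ℝ :=
  sSup ((fun z => f z) '' {z : F | |z| ≤ y})

/-- Disjointness of two functionals: (|f| ⊓ |g|)(y) = 0 for all y ≥ 0, via the
Riesz–Kantorovich formula. -/
def DualDisjoint {F : Type*} [NormedAddCommGroup F] [Lattice F] [HasSolidNorm F] [IsOrderedAddMonoid F] [NormedSpace ℝ F]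
    (f g : F →L[ℝ] ℝ) : Prop :=
  ∀ y : F, 0 ≤ y →
    sInf {r : ℝ | ∃ z : F, 0 ≤ z ∧ z ≤ y ∧ r = absDual f z + absDual g (y - z)} = 0

/-- A pairwise disjoint sequence of functionals. -/
def DualDisjSeq {F : Type*} [NormedAddCommGroup F] [Lattice F] [HasSolidNorm F] [IsOrderedAddMonoid F] [NormedSpace ℝ F]
    (f : ℕ → (F →L[ℝ] ℝ)) : Prop :=
  ∀ m n : ℕ, m ≠ n → DualDisjoint (f m) (f n)

/-- A weak* null sequence of functionals. -/
def WeakStarNull {F : Type*} [NormedAddCommGroup F] [NormedSpace ℝ F]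
    (f : ℕ → (F →L[ℝ] ℝ)) : Prop :=
  ∀ y : F, Tendsto (fun n => f n y) atTop (𝓝 0)

/-- Almost limited operator: ‖T* fₙ‖ → 0 for every disjoint weak* null (fₙ) in F*. -/
def IsAlmostLimited {X F : Type*} [NormedAddCommGroup X] [NormedSpace ℝ X]
    [NormedAddCommGroup F] [Lattice F] [HasSolidNorm F] [IsOrderedAddMonoid F] [NormedSpace ℝ F] (T : X →L[ℝ] F) : Prop :=
  ∀ f : ℕ → (F →L[ℝ] ℝ), DualDisjSeq f → WeakStarNull f →
    Tendsto (fun n => ‖(f n).comp T‖) atTop (𝓝 0)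

/-- The canonical order on the dual: f ≤ g iff f y ≤ g y for all y ≥ 0. -/
def DualLE {F : Type*} [NormedAddCommGroup F] [Lattice F] [HasSolidNorm F] [IsOrderedAddMonoid F] [NormedSpace ℝ F]
    (f g : F →L[ℝ] ℝ) : Prop :=
  ∀ y : F, 0 ≤ y → f y ≤ g y

/-- The dual E* is a KB-space: every increasing norm-bounded sequence of positive
functionals is norm convergent. -/
def DualKB (E : Type*) [NormedAddCommGroup E] [Lattice E] [HasSolidNorm E] [IsOrderedAddMonoid E] [NormedSpace ℝ E] : Prop :=
  ∀ f : ℕ → (E →L[ℝ] ℝ), (∀ n, PosFunc (f n)) →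
    (∀ m n : ℕ, m ≤ n → DualLE (f m) (f n)) → (∃ M : ℝ, ∀ n, ‖f n‖ ≤ M) →
      ∃ g : E →L[ℝ] ℝ, Tendsto (fun n => ‖f n - g‖) atTop (𝓝 0)

/-- Positive operator. -/
def PosOp {E F : Type*} [NormedAddCommGroup E] [Lattice E] [HasSolidNorm E] [IsOrderedAddMonoid E] [NormedSpace ℝ E]
    [NormedAddCommGroup F] [Lattice F] [HasSolidNorm F] [IsOrderedAddMonoid F] [NormedSpace ℝ F] (T : E →L[ℝ] F) : Prop :=
  ∀ x : E, 0 ≤ x → 0 ≤ T x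

/-- Order bounded operator: maps order intervals into order intervals. -/
def OrderBoundedOp {E F : Type*} [NormedAddCommGroup E] [Lattice E] [HasSolidNorm E] [IsOrderedAddMonoid E] [NormedSpace ℝ E]
    [NormedAddCommGroup F] [Lattice F] [HasSolidNorm F] [IsOrderedAddMonoid F] [NormedSpace ℝ F] (T : E →L[ℝ] F) : Prop :=
  ∀ a b : E, ∃ c d : F, T '' Set.Icc a b ⊆ Set.Icc c d

/-- Order L-weakly compact operator: maps order bounded sets onto Lwc sets. -/
def IsOLwc {E F : Type*} [NormedAddCommGroup E] [Lattice E] [HasSolidNorm E] [IsOrderedAddMonoid E] [NormedSpace ℝ E]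
    [NormedAddCommGroup F] [Lattice F] [HasSolidNorm F] [IsOrderedAddMonoid F] [NormedSpace ℝ F] (T : E →L[ℝ] F) : Prop :=
  ∀ a b : E, IsLwcSet (T '' Set.Icc a b)

/-- Order M-weakly compact operator. -/
def IsOMwc {E F : Type*} [NormedAddCommGroup E] [Lattice E] [HasSolidNorm E] [IsOrderedAddMonoid E] [NormedSpace ℝ E]
    [NormedAddCommGroup F] [Lattice F] [HasSolidNorm F] [IsOrderedAddMonoid F] [NormedSpace ℝ F] (T : E →L[ℝ] F) : Prop :=
  ∀ f : ℕ → (F →L[ℝ] ℝ),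
    (∃ g h : F →L[ℝ] ℝ, ∀ n, DualLE g (f n) ∧ DualLE (f n) h) →
    ∀ x : ℕ → E, DisjSeq x → BddSeq x →
      Tendsto (fun n => f n (T (x n))) atTop (𝓝 0)

/-- Dunford–Pettis operator. -/
def IsDP {X Y : Type*} [NormedAddCommGroup X] [NormedSpace ℝ X]
    [NormedAddCommGroup Y] [NormedSpace ℝ Y] (T : X →L[ℝ] Y) : Prop :=
  ∀ x : ℕ → X, WeakTendsto x 0 → Tendsto (fun n => ‖T (x n)‖) atTop (𝓝 0)

/-- Weakly sequentially continuous lattice operations. -/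
def WSCLatticeOps (F : Type*) [NormedAddCommGroup F] [Lattice F] [HasSolidNorm F] [IsOrderedAddMonoid F] [NormedSpace ℝ F] : Prop :=
  ∀ x : ℕ → F, WeakTendsto x 0 → WeakTendsto (fun n => |x n|) 0

/-- Limitedly M-weakly compact operator: T xₙ → 0 weakly for each disjoint bounded (xₙ). -/
def IsLMwc {E Y : Type*} [NormedAddCommGroup E] [Lattice E] [HasSolidNorm E] [IsOrderedAddMonoid E] [NormedSpace ℝ E]
    [NormedAddCommGroup Y] [NormedSpace ℝ Y] (T : E →L[ℝ] Y) : Prop :=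
  ∀ x : ℕ → E, DisjSeq x → BddSeq x → WeakTendsto (fun n => T (x n)) 0

end Defs

/-! A weakly convergent sequence of functionals is norm bounded (uniform boundedness, applied in
the bidual), so `T ↦ (fₙ (T xₙ))ₙ` is uniformly continuous into sequences with the sup metric and
the null condition passes to norm limits. For the ideal property, composing with `S` carries
weakly convergent sequences in the dual to weakly convergent ones. -/

section NormedSpace

variable {X Y : Type*} [NormedAddCommGroup X] [NormedSpace ℝ X]
  [NormedAddCommGroup Y] [NormedSpace ℝ Y]

theorem WeakTendsto.map {x : ℕ → X} {a : X} (hx : WeakTendsto x a) (L : X →L[ℝ] Y) :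
    WeakTendsto (fun n => L (x n)) (L a) :=
  fun φ => hx (φ.comp L)

theorem WeakTendsto.bddSeq {x : ℕ → X} {a : X} (hx : WeakTendsto x a) : BddSeq x := by
  obtain ⟨C, hC⟩ := banach_steinhaus (g := fun n => NormedSpace.inclusionInDoubleDual ℝ X (x n))
    fun φ => by
      obtain ⟨C, hC⟩ := (hx φ).norm.bddAbove_range
      exact ⟨C, fun n => hC ⟨n, rfl⟩⟩
  exact ⟨C, fun n => (NormedSpace.inclusionInDoubleDualLi ℝ).norm_map (x n) ▸ hC n⟩

theorem dist_apply_apply_le (f : Y →L[ℝ] ℝ) (T T' : X →L[ℝ] Y) (x : X) :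
    dist (f (T x)) (f (T' x)) ≤ ‖f‖ * (‖T - T'‖ * ‖x‖) := by
  rw [dist_eq_norm, ← map_sub, ← sub_apply]
  exact (f.le_opNorm _).trans (by gcongr; exact (T - T').le_opNorm x)

end NormedSpace

section IsAMwc

variable {E Y Z : Type*} [NormedAddCommGroup E] [Lattice E] [HasSolidNorm E]
  [IsOrderedAddMonoid E] [NormedSpace ℝ E] [NormedAddCommGroup Y] [NormedSpace ℝ Y]
  [NormedAddCommGroup Z] [NormedSpace ℝ Z]

theorem IsAMwc.add {T S : E →L[ℝ] Y} (hT : IsAMwc T) (hS : IsAMwc S) : IsAMwc (T + S) :=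
  fun f g hfg x hx hbx => by
    simpa only [add_apply, map_add, add_zero] using
      (hT f g hfg x hx hbx).add (hS f g hfg x hx hbx)

theorem IsAMwc.const_smul {T : E →L[ℝ] Y} (hT : IsAMwc T) (c : ℝ) : IsAMwc (c • T) :=
  fun f g hfg x hx hbx => by
    simpa only [smul_apply, map_smul, smul_eq_mul, mul_zero] using
      (hT f g hfg x hx hbx).const_mul c

theorem IsAMwc.comp {T : E →L[ℝ] Y} (hT : IsAMwc T) (S : Y →L[ℝ] Z) : IsAMwc (S.comp T) :=
  fun f g hfg x hx hbx =>
    hT (fun n => (f n).comp S) (g.comp S) (hfg.map ((ContinuousLinearMap.compL ℝ Y Z ℝ).flip S))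
      x hx hbx

theorem isClosed_setOf_isAMwc : IsClosed {T : E →L[ℝ] Y | IsAMwc T} := by
  refine isClosed_of_closure_subset fun T hT f g hfg x hx hbx => ?_
  obtain ⟨S, hS, hST⟩ := mem_closure_iff_seq_limit.mp hT
  obtain ⟨C, hC⟩ := hfg.bddSeq
  obtain ⟨M, hM⟩ := hbx
  have hC0 : 0 ≤ C := (norm_nonneg _).trans (hC 0)
  have hST' : Tendsto (fun k => C * (‖S k - T‖ * M)) atTop (𝓝 0) := by
    simpa using ((tendsto_iff_norm_sub_tendsto_zero.mp hST).mul_const M).const_mul C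
  have hunif : TendstoUniformly (fun k n => f n (S k (x n))) (fun n => f n (T (x n))) atTop := by
    refine Metric.tendstoUniformly_iff.mpr fun ε hε => ?_
    filter_upwards [hST'.eventually (gt_mem_nhds hε)] with k hk n
    calc dist (f n (T (x n))) (f n (S k (x n)))
        _ = dist (f n (S k (x n))) (f n (T (x n))) := dist_comm _ _
        _ ≤ ‖f n‖ * (‖S k - T‖ * ‖x n‖) := dist_apply_apply_le _ _ _ _
        _ ≤ C * (‖S k - T‖ * M) := by gcongr <;> simp only [hC, hM]
        _ < ε := hk
  exact hunif.tendsto_of_eventually_tendsto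
    (Eventually.of_forall fun k => hS k f g hfg x hx ⟨M, hM⟩) tendsto_const_nhds

end IsAMwc

theorem stmt_6_general {E : Type*} [NormedAddCommGroup E] [Lattice E] [HasSolidNorm E] [IsOrderedAddMonoid E] [NormedSpace ℝ E] :
    IsClosed {T : E →L[ℝ] E | IsAMwc T} ∧
    (∀ T S : E →L[ℝ] E, IsAMwc T → IsAMwc S → IsAMwc (T + S)) ∧
    (∀ (c : ℝ) (T : E →L[ℝ] E), IsAMwc T → IsAMwc (c • T)) ∧
    (∀ T S : E →L[ℝ] E, IsAMwc T → IsAMwc (S.comp T)) :=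
  ⟨isClosed_setOf_isAMwc, fun _ _ hT hS => hT.add hS, fun c _ hT => hT.const_smul c,
    fun _ S hT => hT.comp S⟩

/-- aMwc(E) is a norm-closed left ideal (hence a subalgebra) of L(E). -/
theorem stmt_6 {E : Type*} [NormedAddCommGroup E] [Lattice E] [HasSolidNorm E] [IsOrderedAddMonoid E] [NormedSpace ℝ E] [CompleteSpace E] :
    IsClosed {T : E →L[ℝ] E | IsAMwc T} ∧
    (∀ T S : E →L[ℝ] E, IsAMwc T → IsAMwc S → IsAMwc (T + S)) ∧
    (∀ (c : ℝ) (T : E →L[ℝ] E), IsAMwc T → IsAMwc (c • T)) ∧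
    (∀ T S : E →L[ℝ] E, IsAMwc T → IsAMwc (S.comp T)) :=
  stmt_6_general
end

section
/- If E is an AM-space, then every bounded operator T : E → Y into a Banach space Y is almost M-weakly compact. -/
open Filter Topology

/-!
In an AM-space the norm of a finite sum of pairwise disjoint positive elements is the maximum of
their norms. Hence a disjoint bounded sequence `(xₙ)` satisfies `∑ |φ (xₙ)| ≤ ‖φ‖ · sup ‖xₙ‖` for
every `φ ∈ E*`: it is weakly unconditionally Cauchy, and so is `(T xₙ)`. For such a sequence
`(yₖ)` in `Y`, every bounded sign pattern `θ` gives an element `h ↦ ∑ θₖ h(yₖ)` of `Y**`, so a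
weakly convergent sequence `fₙ → g` in `Y*` makes the rows `((fₙ - g)(yₖ))ₖ` weakly null in `ℓ¹`.
Schur's gliding hump argument turns this into `∑ₖ |(fₙ - g)(yₖ)| → 0`, and then
`fₙ (yₙ) = (fₙ - g)(yₙ) + g (yₙ) → 0`.
-/

section Disjoint

variable {E : Type*} [Lattice E] [AddCommGroup E] [IsOrderedAddMonoid E]

lemma add_inf_eq_zero {a b c : E} (ha : 0 ≤ a) (hb : 0 ≤ b) (hc : 0 ≤ c)
    (hac : a ⊓ c = 0) (hbc : b ⊓ c = 0) : (a + b) ⊓ c = 0 := by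
  refine le_antisymm ?_ (le_inf (add_nonneg ha hb) hc)
  have hdistrib : a ⊓ c + b ⊓ c = ((a + b) ⊓ (a + c)) ⊓ ((c + b) ⊓ (c + c)) := by
    rw [inf_add, add_inf, add_inf]
  calc (a + b) ⊓ c
      ≤ ((a + b) ⊓ (a + c)) ⊓ ((c + b) ⊓ (c + c)) :=
        le_inf (le_inf inf_le_left (inf_le_right.trans (le_add_of_nonneg_left ha)))
          (le_inf (inf_le_right.trans (le_add_of_nonneg_right hb))
            (inf_le_right.trans (le_add_of_nonneg_right hc)))
    _ = 0 := by rw [← hdistrib, hac, hbc, add_zero]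

lemma DisjSeq.sum_abs_inf_abs_eq_zero {x : ℕ → E} (hx : DisjSeq x) {s : Finset ℕ} {a : ℕ}
    (ha : a ∉ s) : (∑ k ∈ s, |x k|) ⊓ |x a| = 0 := by
  classical
  induction s using Finset.induction_on with
  | empty => simp
  | insert b t hb ih =>
    rw [Finset.mem_insert, not_or] at ha
    rw [Finset.sum_insert hb]
    exact add_inf_eq_zero (abs_nonneg _) (Finset.sum_nonneg fun k _ => abs_nonneg _)
      (abs_nonneg _) (hx b a (Ne.symm ha.1)) (ih ha.2)

lemma abs_sign_smul_le [Module ℝ E] (t : ℝ) (x : E) : |(SignType.sign t : ℝ) • x| ≤ |x| := by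
  rcases SignType.sign t with _ | _ | _ <;> simp

end Disjoint

section WeaklyUnconditionallyCauchy

/-- The bounded form of `∑ₖ |h (yₖ)| < ∞` for all `h ∈ Y*`; the two agree by the uniform
boundedness principle. -/
def IsWeaklyUnconditionallyCauchy {Y : Type*} [NormedAddCommGroup Y] [NormedSpace ℝ Y]
    (y : ℕ → Y) : Prop :=
  ∃ C : ℝ, ∀ (h : Y →L[ℝ] ℝ) (s : Finset ℕ), ∑ k ∈ s, |h (y k)| ≤ C * ‖h‖

variable {X Y : Type*} [NormedAddCommGroup X] [NormedSpace ℝ X]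
  [NormedAddCommGroup Y] [NormedSpace ℝ Y] {y : ℕ → Y}

namespace IsWeaklyUnconditionallyCauchy

lemma map (hy : IsWeaklyUnconditionallyCauchy y) (T : Y →L[ℝ] X) :
    IsWeaklyUnconditionallyCauchy fun k => T (y k) := by
  obtain ⟨C, hC⟩ := hy
  refine ⟨max C 0 * ‖T‖, fun h s => ?_⟩
  calc ∑ k ∈ s, |h (T (y k))| ≤ C * ‖h.comp T‖ := hC (h.comp T) s
    _ ≤ max C 0 * (‖h‖ * ‖T‖) := by gcongr; exacts [le_max_left _ _, h.opNorm_comp_le T]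
    _ = max C 0 * ‖T‖ * ‖h‖ := by ring

lemma summable_abs (hy : IsWeaklyUnconditionallyCauchy y) (h : Y →L[ℝ] ℝ) :
    Summable fun k => |h (y k)| := by
  obtain ⟨C, hC⟩ := hy
  exact summable_of_sum_range_le (fun k => abs_nonneg _) fun n => hC h _

lemma tsum_abs_le (hy : IsWeaklyUnconditionallyCauchy y) :
    ∃ C : ℝ, ∀ h : Y →L[ℝ] ℝ, ∑' k, |h (y k)| ≤ C * ‖h‖ := by
  obtain ⟨C, hC⟩ := hy
  exact ⟨C, fun h => Real.tsum_le_of_sum_range_le (fun k => abs_nonneg _) fun n => hC h _⟩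

lemma tendsto_apply (hy : IsWeaklyUnconditionallyCauchy y) (h : Y →L[ℝ] ℝ) :
    Tendsto (fun n => h (y n)) atTop (𝓝 0) :=
  (summable_abs_iff.1 (hy.summable_abs h)).tendsto_atTop_zero

lemma exists_clm_eq_tsum_mul (hy : IsWeaklyUnconditionallyCauchy y) {θ : ℕ → ℝ}
    (hθ : ∀ k, |θ k| ≤ 1) :
    ∃ ψ : (Y →L[ℝ] ℝ) →L[ℝ] ℝ, ∀ h, ψ h = ∑' k, θ k * h (y k) := by
  have habs : ∀ h : Y →L[ℝ] ℝ, ∀ k, |θ k * h (y k)| ≤ |h (y k)| := fun h k => by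
    rw [abs_mul]; exact mul_le_of_le_one_left (abs_nonneg _) (hθ k)
  have hsum : ∀ h : Y →L[ℝ] ℝ, Summable fun k => θ k * h (y k) := fun h =>
    (hy.summable_abs h).of_norm_bounded (habs h)
  obtain ⟨C, hC⟩ := hy.tsum_abs_le
  refine ⟨LinearMap.mkContinuous
    { toFun := fun h => ∑' k, θ k * h (y k)
      map_add' := fun h g => by
        simp [mul_add, (hsum h).tsum_add (hsum g)]
      map_smul' := fun r h => by
        simp [← tsum_mul_left, mul_left_comm r] } C fun h => ?_, fun h => rfl⟩
  calc ‖∑' k, θ k * h (y k)‖ ≤ ∑' k, ‖θ k * h (y k)‖ := norm_tsum_le_tsum_norm (hsum h).norm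
    _ ≤ ∑' k, |h (y k)| := (hsum h).norm.tsum_le_tsum (habs h) (hy.summable_abs h)
    _ ≤ C * ‖h‖ := hC h

end IsWeaklyUnconditionallyCauchy

end WeaklyUnconditionallyCauchy

section AMSpace

def IsAMSpace (E : Type*) [NormedAddCommGroup E] [Lattice E] : Prop :=
  ∀ x y : E, 0 ≤ x → 0 ≤ y → ‖x ⊔ y‖ = max ‖x‖ ‖y‖

variable {E : Type*} [NormedAddCommGroup E] [Lattice E] [HasSolidNorm E] [IsOrderedAddMonoid E]

lemma IsAMSpace.norm_sum_abs_le (hE : IsAMSpace E) {x : ℕ → E} (hx : DisjSeq x) {M : ℝ}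
    (hM : ∀ n, ‖x n‖ ≤ M) (s : Finset ℕ) : ‖∑ k ∈ s, |x k|‖ ≤ M := by
  classical
  induction s using Finset.induction_on with
  | empty => simpa using (norm_nonneg _).trans (hM 0)
  | insert b t hb ih =>
    have hdisj : |x b| ⊓ ∑ k ∈ t, |x k| = 0 := by
      rw [inf_comm]; exact hx.sum_abs_inf_abs_eq_zero hb
    have hsum : |x b| + ∑ k ∈ t, |x k| = |x b| ⊔ ∑ k ∈ t, |x k| := by
      rw [← inf_add_sup, hdisj, zero_add]
    rw [Finset.sum_insert hb, hsum,
      hE _ _ (abs_nonneg _) (Finset.sum_nonneg fun k _ => abs_nonneg _), norm_abs_eq_norm]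
    exact max_le (hM b) ih

variable [NormedSpace ℝ E]

theorem DisjSeq.isWeaklyUnconditionallyCauchy (hE : IsAMSpace E) {x : ℕ → E} (hx : DisjSeq x)
    (hb : BddSeq x) : IsWeaklyUnconditionallyCauchy x := by
  obtain ⟨M, hM⟩ := hb
  refine ⟨M, fun φ s => ?_⟩
  set z := ∑ k ∈ s, (SignType.sign (φ (x k)) : ℝ) • x k
  have hz : ‖z‖ ≤ M := by
    refine (HasSolidNorm.solid ?_).trans (hE.norm_sum_abs_le hx hM s)
    rw [abs_of_nonneg (a := ∑ k ∈ s, |x k|) (Finset.sum_nonneg fun k _ => abs_nonneg _)]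
    exact (Finset.le_sum_of_subadditive _ abs_zero.le abs_add_le _ _).trans
      (Finset.sum_le_sum fun k _ => abs_sign_smul_le _ _)
  calc ∑ k ∈ s, |φ (x k)| = φ z := by simp [z, map_sum, sign_mul_self]
    _ ≤ ‖φ‖ * ‖z‖ := (le_abs_self _).trans (φ.le_opNorm z)
    _ ≤ M * ‖φ‖ := by rw [mul_comm]; gcongr

end AMSpace

section GlidingHump

lemma SignType.abs_coe_le_one (s : SignType) : |(s : ℝ)| ≤ 1 := by
  rcases s with _ | _ | _ <;> simp

lemma two_mul_sum_abs_sub_tsum_abs_le_tsum_mul {b θ : ℕ → ℝ} (hb : Summable b)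
    (hθ : ∀ k, |θ k| ≤ 1) {B : Finset ℕ} (hB : ∀ k ∈ B, θ k * b k = |b k|) :
    2 * ∑ k ∈ B, |b k| - ∑' k, |b k| ≤ ∑' k, θ k * b k := by
  have habs : ∀ k, |θ k * b k| ≤ |b k| := fun k => by
    rw [abs_mul]; exact mul_le_of_le_one_left (abs_nonneg _) (hθ k)
  have hθb : Summable fun k => θ k * b k := hb.abs.of_norm_bounded habs
  have hrest : -∑' k : ↑(↑B : Set ℕ)ᶜ, |b k| ≤ ∑' k : ↑(↑B : Set ℕ)ᶜ, θ k * b k := by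
    rw [← tsum_neg]
    exact (hb.abs.subtype _).neg.tsum_le_tsum (fun k => neg_le_of_abs_le (habs k))
      (hθb.subtype _)
  rw [← hθb.sum_add_tsum_compl (s := B), ← hb.abs.sum_add_tsum_compl (s := B),
    Finset.sum_congr rfl hB]
  linarith

lemma StrictMono.exists_blockIndex {c : ℕ → ℕ} (hc : StrictMono c) :
    ∃ J : ℕ → ℕ, ∀ j k, c j ≤ k → k < c (j + 1) → J k = j := by
  classical
  refine ⟨fun k => Nat.findGreatest (fun j => c j ≤ k) k, fun j k hjk hkj => ?_⟩
  rw [Nat.findGreatest_eq_iff]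
  refine ⟨hc.le_apply.trans hjk, fun _ => hjk, fun n hjn _ hnk => ?_⟩
  exact absurd (hc.monotone (show j + 1 ≤ n from hjn)) (by omega)

lemma eventually_exists_tsum_abs_sub_le_sum_Ico {a : ℕ → ℕ → ℝ} (ha : ∀ n, Summable (a n))
    (hcol : ∀ k, Tendsto (fun n => a n k) atTop (𝓝 0)) {δ : ℝ} (hδ : 0 < δ) (c : ℕ) :
    ∀ᶠ n in atTop, ∃ C, c < C ∧ ∑' k, |a n k| - δ ≤ ∑ k ∈ Finset.Ico c C, |a n k| := by
  have hhead : Tendsto (fun n => ∑ k ∈ Finset.range c, |a n k|) atTop (𝓝 0) := by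
    simpa using tendsto_finsetSum _ fun k _ => (hcol k).abs
  filter_upwards [hhead.eventually (gt_mem_nhds (half_pos hδ))] with n hn
  have hpartial := (ha n).abs.tendsto_sum_tsum_nat.eventually
    (lt_mem_nhds (sub_lt_self (∑' k, |a n k|) (half_pos hδ)))
  obtain ⟨C, hC, hCc⟩ := (hpartial.and (eventually_gt_atTop c)).exists
  refine ⟨C, hCc, ?_⟩
  rw [← Finset.sum_range_add_sum_Ico _ hCc.le] at hC
  linarith

theorem tendsto_tsum_abs_of_forall_tendsto_tsum_mul {a : ℕ → ℕ → ℝ} (ha : ∀ n, Summable (a n))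
    (h : ∀ θ : ℕ → ℝ, (∀ k, |θ k| ≤ 1) → Tendsto (fun n => ∑' k, θ k * a n k) atTop (𝓝 0)) :
    Tendsto (fun n => ∑' k, |a n k|) atTop (𝓝 0) := by
  have hcol : ∀ k, Tendsto (fun n => a n k) atTop (𝓝 0) := fun k => by
    simpa [Pi.single_apply] using h (Pi.single k 1) fun i => by
      rcases eq_or_ne i k with rfl | hik <;> simp [*]
  refine tendsto_order.2 ⟨fun r hr => Eventually.of_forall fun n =>
    hr.trans_le (tsum_nonneg fun k => abs_nonneg _), fun ε hε => ?_⟩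
  by_contra hfreq
  simp only [not_eventually, not_lt] at hfreq
  have hhump : ∀ c, ∃ n, c ≤ n ∧ ε ≤ ∑' k, |a n k| ∧
      ∃ C, c < C ∧ ∑' k, |a n k| - ε / 4 ≤ ∑ k ∈ Finset.Ico c C, |a n k| := fun c =>
    (hfreq.and_eventually ((eventually_ge_atTop c).and
      (eventually_exists_tsum_abs_sub_le_sum_Ico ha hcol (by positivity) c))).exists.imp
      fun n hn => ⟨hn.2.1, hn.1, hn.2.2⟩
  choose n hcn hεn C hcC hblock using hhump
  -- the blocks `[c j, c (j + 1))` and the row `n (c j)` whose mass they carry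
  let c : ℕ → ℕ := fun j => Nat.rec 0 (fun _ cj => C cj) j
  have hc : StrictMono c := strictMono_nat_of_lt_succ fun j => hcC (c j)
  obtain ⟨J, hJ⟩ := hc.exists_blockIndex
  let θ : ℕ → ℝ := fun k => SignType.sign (a (n (c (J k))) k)
  have hθ : ∀ k, |θ k| ≤ 1 := fun k => SignType.abs_coe_le_one _
  have hlow : ∀ j, ε / 2 ≤ ∑' k, θ k * a (n (c j)) k := fun j => by
    have hsigns := two_mul_sum_abs_sub_tsum_abs_le_tsum_mul (ha (n (c j))) hθ
      (B := Finset.Ico (c j) (c (j + 1))) fun k hk => by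
        rw [Finset.mem_Ico] at hk
        simp only [θ, hJ j k hk.1 hk.2, sign_mul_self]
    linarith [hεn (c j), hblock (c j)]
  have htop : Tendsto (fun j => n (c j)) atTop atTop :=
    tendsto_atTop_mono (fun j => hc.le_apply.trans (hcn (c j))) tendsto_id
  have hlim := ge_of_tendsto ((h θ hθ).comp htop) (Eventually.of_forall hlow)
  linarith

end GlidingHump

theorem IsWeaklyUnconditionallyCauchy.tendsto_apply_of_weakTendsto {Y : Type*}
    [NormedAddCommGroup Y] [NormedSpace ℝ Y] {y : ℕ → Y} (hy : IsWeaklyUnconditionallyCauchy y)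
    {f : ℕ → Y →L[ℝ] ℝ} {g : Y →L[ℝ] ℝ} (hfg : WeakTendsto f g) :
    Tendsto (fun n => f n (y n)) atTop (𝓝 0) := by
  have hrows : Tendsto (fun n => ∑' k, |(f n - g) (y k)|) atTop (𝓝 0) := by
    refine tendsto_tsum_abs_of_forall_tendsto_tsum_mul
      (fun n => summable_abs_iff.1 (hy.summable_abs _)) fun θ hθ => ?_
    obtain ⟨ψ, hψ⟩ := hy.exists_clm_eq_tsum_mul hθ
    simpa only [← hψ, map_sub, sub_self] using (hfg ψ).sub_const (ψ g)
  have hdiag : Tendsto (fun n => (f n - g) (y n)) atTop (𝓝 0) :=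
    squeeze_zero_norm (fun n => (hy.summable_abs _).le_tsum n fun k _ => abs_nonneg _) hrows
  simpa using hdiag.add (hy.tendsto_apply g)

theorem stmt_9_general {E Y : Type*}
    [NormedAddCommGroup E] [Lattice E] [HasSolidNorm E] [IsOrderedAddMonoid E] [NormedSpace ℝ E]
    [NormedAddCommGroup Y] [NormedSpace ℝ Y]
    (hE : ∀ x y : E, 0 ≤ x → 0 ≤ y → ‖x ⊔ y‖ = max ‖x‖ ‖y‖)
    (T : E →L[ℝ] Y) :
    IsAMwc T := fun _ _ hfg _ hx hb =>
  ((hx.isWeaklyUnconditionallyCauchy hE hb).map T).tendsto_apply_of_weakTendsto hfg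

/-- If E is an AM-space, then every bounded operator T : E → Y is almost
M-weakly compact. -/
theorem stmt_9 {E Y : Type*}
    [NormedAddCommGroup E] [Lattice E] [HasSolidNorm E] [IsOrderedAddMonoid E] [NormedSpace ℝ E] [CompleteSpace E]
    [NormedAddCommGroup Y] [NormedSpace ℝ Y] [CompleteSpace Y]
    (hE : ∀ x y : E, 0 ≤ x → 0 ≤ y → ‖x ⊔ y‖ = max ‖x‖ ‖y‖)
    (T : E →L[ℝ] Y) :
    IsAMwc T :=
  stmt_9_general hE T
end

section
/- If S : E → F is semi-compact and T : F → G is order L-weakly compact (E, F, G Banach lattices), then T∘S is L-weakly compact. -/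
open Filter Topology

/-! Being Lwc is stable under small norm perturbations: if `|xₙ| ≤ |bₙ + rₙ|` with `bₙ` in an
Lwc set and `‖rₙ‖ ≤ ε`, then `zₙ = (|xₙ| - |rₙ|)⁺` is a disjoint sequence in the solid hull of
that set, so `‖zₙ‖ → 0`, while `‖xₙ‖ ≤ ‖zₙ‖ + ε`. Semi-compactness puts `S(B_E)` within `δ` of
an order interval `[-u, u]`, hence `TS(B_E)` lies within `‖T‖ δ` of the Lwc set `T[-u, u]`. -/

open Metric
open scoped Pointwise

section LatticeOrderedGroup

variable {α : Type*} [Lattice α] [AddCommGroup α] [IsOrderedAddMonoid α]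

lemma DisjSeq.of_abs_le {x z : ℕ → α} (hx : DisjSeq x) (hzx : ∀ n, |z n| ≤ |x n|) :
    DisjSeq z := fun m n hmn =>
  le_antisymm (hx m n hmn ▸ inf_le_inf (hzx m) (hzx n))
    (le_inf (abs_nonneg _) (abs_nonneg _))

lemma posPart_sub_add_inf (a b : α) : (a - b)⁺ + a ⊓ b = a := by
  rw [inf_eq_sub_posPart_sub, add_sub_cancel]

lemma posPart_abs_sub_abs_le_abs {x b r : α} (h : |x| ≤ |b + r|) : (|x| - |r|)⁺ ≤ |b| :=
  sup_le (sub_le_iff_le_add.2 (h.trans (abs_add_le b r))) (abs_nonneg b)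

end LatticeOrderedGroup

section NormedLattice

variable {G : Type*} [NormedAddCommGroup G] [Lattice G] [HasSolidNorm G] [IsOrderedAddMonoid G]

lemma norm_le_norm_posPart_abs_sub_abs_add_norm (x r : G) :
    ‖x‖ ≤ ‖(|x| - |r|)⁺‖ + ‖r‖ := by
  have hinf : ‖|x| ⊓ |r|‖ ≤ ‖r‖ := by
    refine (HasSolidNorm.solid ?_).trans_eq (norm_abs_eq_norm r)
    rw [abs_of_nonneg (le_inf (abs_nonneg x) (abs_nonneg r)), abs_abs]
    exact inf_le_right
  calc ‖x‖ = ‖(|x| - |r|)⁺ + |x| ⊓ |r|‖ := by rw [posPart_sub_add_inf, norm_abs_eq_norm]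
    _ ≤ ‖(|x| - |r|)⁺‖ + ‖r‖ := (norm_add_le _ _).trans (by gcongr)

theorem IsLwcSet.of_forall_subset_add_closedBall {A : Set G}
    (h : ∀ ε > 0, ∃ B, IsLwcSet B ∧ A ⊆ B + closedBall 0 ε) : IsLwcSet A := by
  refine ⟨?_, fun x hx hdisj => ?_⟩
  · obtain ⟨B, hB, hAB⟩ := h 1 one_pos
    exact (isBounded_add hB.1 isBounded_closedBall).subset hAB
  rw [NormedAddGroup.tendsto_nhds_zero]
  intro ε hε
  obtain ⟨B, hB, hAB⟩ := h (ε / 2) (half_pos hε)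
  choose a haA hxa using hx
  choose b hbB r hr hbr using fun n => hAB (haA n)
  set z : ℕ → G := fun n => (|x n| - |r n|)⁺
  have hzb : ∀ n, |z n| ≤ |b n| := fun n => by
    rw [abs_of_nonneg (posPart_nonneg _)]
    exact posPart_abs_sub_abs_le_abs ((hxa n).trans_eq (congrArg abs (hbr n).symm))
  have hzx : ∀ n, |z n| ≤ |x n| := fun n => by
    rw [abs_of_nonneg (posPart_nonneg _)]
    exact sup_le (sub_le_self _ (abs_nonneg _)) (abs_nonneg _)
  have hz : Tendsto (fun n => ‖z n‖) atTop (𝓝 0) :=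
    hB.2 z (fun n => ⟨b n, hbB n, hzb n⟩) (hdisj.of_abs_le hzx)
  filter_upwards [hz.eventually (gt_mem_nhds (half_pos hε))] with n hn
  have hrn : ‖r n‖ ≤ ε / 2 := mem_closedBall_zero_iff.1 (hr n)
  rw [Real.norm_of_nonneg (norm_nonneg _)]
  linarith [norm_le_norm_posPart_abs_sub_abs_add_norm (x n) (r n)]

end NormedLattice

lemma ContinuousLinearMap.image_add_closedBall_subset {𝕜 X Y : Type*} [NontriviallyNormedField 𝕜]
    [SeminormedAddCommGroup X] [NormedSpace 𝕜 X] [SeminormedAddCommGroup Y] [NormedSpace 𝕜 Y]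
    (T : X →L[𝕜] Y) (A : Set X)
    (δ : ℝ) : T '' (A + closedBall 0 δ) ⊆ T '' A + closedBall 0 (‖T‖ * δ) := by
  rintro _ ⟨_, ⟨a, ha, e, he, rfl⟩, rfl⟩
  refine ⟨T a, ⟨a, ha, rfl⟩, T e, ?_, (map_add T a e).symm⟩
  rw [mem_closedBall_zero_iff] at he ⊢
  exact T.le_of_opNorm_le_of_le le_rfl he

lemma IsSemiCompact.exists_image_closedBall_subset {E F : Type*}
    [NormedAddCommGroup E] [Lattice E] [HasSolidNorm E] [IsOrderedAddMonoid E] [NormedSpace ℝ E]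
    [NormedAddCommGroup F] [Lattice F] [HasSolidNorm F] [IsOrderedAddMonoid F] [NormedSpace ℝ F]
    {S : E →L[ℝ] F} (hS : IsSemiCompact S) {ε : ℝ} (hε : 0 < ε) :
    ∃ u, S '' closedBall 0 1 ⊆ Set.Icc (-u) u + closedBall 0 ε := by
  obtain ⟨u, -, hu⟩ := hS ε hε
  refine ⟨u, ?_⟩
  rintro _ ⟨x, hx, rfl⟩
  obtain ⟨w, hw, hxw⟩ := hu x hx
  exact ⟨w, hw, S x - w, mem_closedBall_zero_iff.2 hxw, add_sub_cancel w (S x)⟩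

theorem stmt_18_general {E F G : Type*}
    [NormedAddCommGroup E] [Lattice E] [HasSolidNorm E] [IsOrderedAddMonoid E] [NormedSpace ℝ E]
    [NormedAddCommGroup F] [Lattice F] [HasSolidNorm F] [IsOrderedAddMonoid F] [NormedSpace ℝ F]
    [NormedAddCommGroup G] [Lattice G] [HasSolidNorm G] [IsOrderedAddMonoid G] [NormedSpace ℝ G]
    (S : E →L[ℝ] F) (T : F →L[ℝ] G)
    (hS : IsSemiCompact S) (hT : IsOLwc T) :
    IsLwcSet ((T.comp S) '' Metric.closedBall (0 : E) 1) := by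
  refine IsLwcSet.of_forall_subset_add_closedBall fun ε hε => ?_
  obtain ⟨δ, hδ, hTδ⟩ := exists_pos_mul_lt hε ‖T‖
  obtain ⟨u, hu⟩ := hS.exists_image_closedBall_subset hδ
  refine ⟨T '' Set.Icc (-u) u, hT (-u) u, ?_⟩
  calc (T.comp S) '' closedBall 0 1 = T '' (S '' closedBall 0 1) := Set.image_comp T S _
    _ ⊆ T '' (Set.Icc (-u) u + closedBall 0 δ) := Set.image_mono hu
    _ ⊆ T '' Set.Icc (-u) u + closedBall 0 (‖T‖ * δ) := T.image_add_closedBall_subset _ _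
    _ ⊆ T '' Set.Icc (-u) u + closedBall 0 ε :=
      Set.add_subset_add_left (closedBall_subset_closedBall hTδ.le)

/-- If S : E → F is semi-compact and T : F → G is order L-weakly compact, then
T ∘ S is L-weakly compact. -/
theorem stmt_18 {E F G : Type*}
    [NormedAddCommGroup E] [Lattice E] [HasSolidNorm E] [IsOrderedAddMonoid E] [NormedSpace ℝ E] [CompleteSpace E]
    [NormedAddCommGroup F] [Lattice F] [HasSolidNorm F] [IsOrderedAddMonoid F] [NormedSpace ℝ F] [CompleteSpace F]
    [NormedAddCommGroup G] [Lattice G] [HasSolidNorm G] [IsOrderedAddMonoid G] [NormedSpace ℝ G] [CompleteSpace G]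
    (S : E →L[ℝ] F) (T : F →L[ℝ] G)
    (hS : IsSemiCompact S) (hT : IsOLwc T) :
    IsLwcSet ((T.comp S) '' Metric.closedBall (0 : E) 1) :=
  stmt_18_general S T hS hT
end
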